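/- Fix a finite type σ over Ω, a countable ordinal ζ, a hereditarily monotone f ∈ Ω^mon_{σ→σ}, and x ∈ Ω^mon_σ. (1) If Iter_{ζ+1} f x ≥ Iter_ζ f x, then Iter_γ f x ≥ Iter_α f x for all countable ordinals γ > α ≥ ζ. (2) If Iter_{ζ+1} f x ≤ Iter_ζ f x, then Iter_γ f x ≤ Iter_α f x for all countable ordinals γ > α ≥ ζ. -/

import Mathlib

/-!  Framework: finite type structure over Ω = countable ordinals,
     limsup/liminf, transfinite iteration functionals, hereditarily
     positive and hereditarily monotone functionals. -/

noncomputable section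
namespace IterOrd

open Ordinal

theorem omega1_pos : (0 : Ordinal) < ω₁ := Ordinal.omega0_pos.trans Ordinal.omega0_lt_omega_one

/-- `Om` is Ω, the set of countable ordinals (ordinals `< ω₁`). -/
abbrev Om : Type 1 := {o : Ordinal // o < ω₁}

/-- Infimum of a subset of Ω (the minimum for nonempty sets; `0` for `∅`). -/
def infOm (s : Set Om) : Om :=
  ⟨sInf (Subtype.val '' s), by
    rcases (Subtype.val '' s).eq_empty_or_nonempty with h | h
    · rw [h]; simpa using omega1_pos
    · obtain ⟨x, _, he⟩ := csInf_mem h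
      exact he ▸ x.2⟩

/-- Supremum of a subset of Ω.  Whenever the supremum of the set exists in Ω
(in particular for every countable subset, by regularity of `ω₁`) this is the
genuine supremum; otherwise it takes a junk value. -/
def supOm (s : Set Om) : Om :=
  if h : sSup (Subtype.val '' s) < ω₁ then ⟨sSup (Subtype.val '' s), h⟩ else ⟨0, omega1_pos⟩

/-- Finite types over the base type `o` (interpreted as Ω). -/
inductive Ty : Type
  | base : Ty
  | arrow : Ty → Ty → Ty
deriving DecidableEq

/-- The full type structure over Ω: `El base = Ω` and
`El (arrow σ τ)` is the set of all functions `El σ → El τ`. -/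
@[reducible] def El : Ty → Type 1
  | .base => Om
  | .arrow σ τ => El σ → El τ

/-- The order on each `El σ`: the ordinal order at base type, pointwise at arrow types. -/
def Le : (σ : Ty) → El σ → El σ → Prop
  | .base => fun x y => x ≤ y
  | .arrow σ τ => fun f g => ∀ x : El σ, Le τ (f x) (g x)

/-- Suprema, computed pointwise at function types. -/
def supEl : (σ : Ty) → Set (El σ) → El σ
  | .base => supOm
  | .arrow σ τ => fun S (x : El σ) => supEl τ ((fun f : El (.arrow σ τ) => f x) '' S)

/-- Infima, computed pointwise at function types. -/
def infEl : (σ : Ty) → Set (El σ) → El σ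
  | .base => infOm
  | .arrow σ τ => fun S (x : El σ) => infEl τ ((fun f : El (.arrow σ τ) => f x) '' S)

/-- `limsup_{ξ→ζ} f ξ = inf_{γ<ζ} sup_{γ≤ξ<ζ} f ξ`. -/
def limsupEl (σ : Ty) (ζ : Ordinal) (f : ∀ ξ : Ordinal, ξ < ζ → El σ) : El σ :=
  infEl σ {y | ∃ γ, ∃ _ : γ < ζ, y = supEl σ {z | ∃ ξ, ∃ h : ξ < ζ, γ ≤ ξ ∧ z = f ξ h}}

/-- `liminf_{ξ→ζ} f ξ = sup_{γ<ζ} inf_{γ≤ξ<ζ} f ξ`. -/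
def liminfEl (σ : Ty) (ζ : Ordinal) (f : ∀ ξ : Ordinal, ξ < ζ → El σ) : El σ :=
  supEl σ {y | ∃ γ, ∃ _ : γ < ζ, y = infEl σ {z | ∃ ξ, ∃ h : ξ < ζ, γ ≤ ξ ∧ z = f ξ h}}

/-- `limsup` of a ζ-indexed sequence of ordinals. -/
def oLimsup (ζ : Ordinal) (a : Ordinal → Ordinal) : Ordinal :=
  sInf {s | ∃ γ, γ < ζ ∧ s = sSup (a '' {ξ | γ ≤ ξ ∧ ξ < ζ})}

/-- `liminf` of a ζ-indexed sequence of ordinals. -/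
def oLiminf (ζ : Ordinal) (a : Ordinal → Ordinal) : Ordinal :=
  sSup {s | ∃ γ, γ < ζ ∧ s = sInf (a '' {ξ | γ ≤ ξ ∧ ξ < ζ})}

/-- The α-iteration functional of type σ:
`Iter 0 f x = x`, `Iter (α+1) f x = f (Iter α f x)`, and
`Iter μ f x = limsup_{ξ→μ} Iter ξ f x` for limit μ. -/
def Iter (σ : Ty) (α : Ordinal) : (El σ → El σ) → El σ → El σ :=
  Ordinal.limitRecOn (motive := fun _ => (El σ → El σ) → El σ → El σ) α
    (fun _ x => x)
    (fun _ ih f x => f (ih f x))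
    (fun μ _ ih f x => limsupEl σ μ (fun ξ h => ih ξ h f x))

/-- The pair (hereditarily positive, ≤hp), defined simultaneously by recursion on the type.
Every element of `Ω` and of `Ω_{ρ→τ}` with `ρ ≠ τ` is h.p., and `≤hp` there is `≤`;
`f : Ω_{τ→τ}` is h.p. iff it preserves h.p., is inflationary on h.p. arguments and is
monotone (w.r.t. `≤hp`) on h.p. arguments; `f ≤hp f'` on `Ω_{τ→τ}` iff `f x ≤hp f' x`
for every h.p. `x`. -/
def HPaux : (σ : Ty) → (El σ → Prop) × (El σ → El σ → Prop)
  | .base => ⟨fun _ => True, fun x y => x ≤ y⟩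
  | .arrow ρ τ =>
      ⟨fun f =>
        if h : ρ = τ then
          (∀ x, (HPaux ρ).1 x → (HPaux τ).1 (f x)) ∧
          (∀ x, (HPaux ρ).1 x → (HPaux τ).2 (cast (congrArg El h) x) (f x)) ∧
          (∀ x y, (HPaux ρ).1 x → (HPaux ρ).1 y → (HPaux ρ).2 x y → (HPaux τ).2 (f x) (f y))
        else True,
       fun f g =>
        if ρ = τ then ∀ x, (HPaux ρ).1 x → (HPaux τ).2 (f x) (g x)
        else Le (.arrow ρ τ) f g⟩

/-- Hereditarily positive functionals. -/
def Hp (σ : Ty) : El σ → Prop := (HPaux σ).1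

/-- The order `≤hp`. -/
def HpLe (σ : Ty) : El σ → El σ → Prop := (HPaux σ).2

/-- `f =hp g` iff `f ≤hp g` and `g ≤hp f`. -/
def HpEq (σ : Ty) (f g : El σ) : Prop := HpLe σ f g ∧ HpLe σ g f

/-- The pair (hereditarily monotone, ≤ on the hereditarily monotone structure),
by recursion on the type.  `f` is hereditarily monotone iff it maps hereditarily
monotone arguments to hereditarily monotone values, monotonically; the order is
pointwise over hereditarily monotone arguments (i.e. the order of `Ω^mon`). -/
def HMaux : (σ : Ty) → (El σ → Prop) × (El σ → El σ → Prop)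
  | .base => ⟨fun _ => True, fun x y => x ≤ y⟩
  | .arrow σ τ =>
      ⟨fun f =>
        (∀ x, (HMaux σ).1 x → (HMaux τ).1 (f x)) ∧
        (∀ x y, (HMaux σ).1 x → (HMaux σ).1 y → (HMaux σ).2 x y → (HMaux τ).2 (f x) (f y)),
       fun f g => ∀ x, (HMaux σ).1 x → (HMaux τ).2 (f x) (g x)⟩

/-- Hereditarily monotone functionals: the members of the type structure `Ω^mon`. -/
def HM (σ : Ty) : El σ → Prop := (HMaux σ).1

/-- The (pointwise) order of the hereditarily monotone type structure `Ω^mon`. -/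
def LeHM (σ : Ty) : El σ → El σ → Prop := (HMaux σ).2

/-- Equality in the hereditarily monotone type structure `Ω^mon`. -/
def EqHM (σ : Ty) (f g : El σ) : Prop := LeHM σ f g ∧ LeHM σ g f

/-! Countable suprema and nonempty infima in `Ω^mon` are computed pointwise, so every stage
`Iter α f x` with `α < ω₁` is hereditarily monotone and `f` acts monotonically on the stages.
An increasing step `Iter ζ ≤ Iter (ζ + 1)` then propagates by transfinite induction: at successors
by monotonicity of `f`, and at a limit `δ` because `Iter δ` lies below the supremum of the tail
`Iter ξ` (`ζ ≤ ξ < δ`), each of which satisfies `Iter ξ ≤ f (Iter ξ) ≤ f (Iter δ)`. A limsup is an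
infimum of suprema, so the decreasing case is not the order dual: there, at a limit `δ`, every tail
supremum bounds `f (Iter δ) ≤ f (Iter ξ) = Iter (ξ + 1)` for `ξ` beyond `ζ` and the tail's start. -/

open Order

theorem sSup_lt_omega_one_of_countable {S : Set Ordinal} (hS : S.Countable)
    (h : ∀ o ∈ S, o < ω₁) : sSup S < ω₁ := by
  rcases S.eq_empty_or_nonempty with rfl | hne
  · simpa using omega1_pos
  · obtain ⟨g, rfl⟩ := hS.exists_eq_range hne
    exact Ordinal.iSup_lt_omega_one fun n => h _ ⟨n, rfl⟩

theorem countable_Iio_of_lt_omega_one {μ : Ordinal} (hμ : μ < ω₁) : (Set.Iio μ).Countable := by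
  rw [← Cardinal.le_aleph0_iff_set_countable, Cardinal.mk_Iio_ordinal, Cardinal.lift_le_aleph0,
    ← Cardinal.lt_aleph_one_iff, ← Cardinal.lt_omega_iff_card_lt]
  exact hμ

theorem le_supOm {S : Set Om} (hS : S.Countable) {a : Om} (ha : a ∈ S) : a ≤ supOm S := by
  have hlt : sSup (Subtype.val '' S) < ω₁ :=
    sSup_lt_omega_one_of_countable (hS.image _) (by rintro _ ⟨z, _, rfl⟩; exact z.2)
  rw [supOm, dif_pos hlt]
  exact le_csSup ⟨ω₁, by rintro _ ⟨z, _, rfl⟩; exact z.2.le⟩ ⟨a, ha, rfl⟩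

theorem supOm_le {S : Set Om} {c : Om} (h : ∀ a ∈ S, a ≤ c) : supOm S ≤ c := by
  rw [supOm]
  split
  · show sSup (Subtype.val '' S) ≤ c.1
    exact csSup_le' (by rintro _ ⟨z, hz, rfl⟩; exact h z hz)
  · exact zero_le (a := c.1)

theorem infOm_le {S : Set Om} {a : Om} (ha : a ∈ S) : infOm S ≤ a :=
  csInf_le (OrderBot.bddBelow (Subtype.val '' S)) ⟨a, ha, rfl⟩

theorem le_infOm {S : Set Om} (hne : S.Nonempty) {c : Om} (h : ∀ a ∈ S, c ≤ a) :
    c ≤ infOm S :=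
  le_csInf (hne.image Subtype.val) (by rintro _ ⟨z, hz, rfl⟩; exact h z hz)

theorem leHM_refl (σ : Ty) (a : El σ) : LeHM σ a a := by
  induction σ with
  | base => exact le_refl (α := Om) a
  | arrow σ τ _ ihτ => exact fun y _ => ihτ (a y)

theorem leHM_trans (σ : Ty) {a b c : El σ} : LeHM σ a b → LeHM σ b c → LeHM σ a c := by
  induction σ with
  | base => exact le_trans (α := Om)
  | arrow σ τ _ ihτ => exact fun hab hbc y hy => ihτ (hab y hy) (hbc y hy)

theorem le_supEl (σ : Ty) {S : Set (El σ)} (hS : S.Countable) {a : El σ} (ha : a ∈ S) :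
    LeHM σ a (supEl σ S) := by
  induction σ with
  | base => exact le_supOm hS ha
  | arrow σ τ _ ihτ => exact fun y _ => ihτ (hS.image _) ⟨a, ha, rfl⟩

theorem supEl_le (σ : Ty) {S : Set (El σ)} {c : El σ} (h : ∀ a ∈ S, LeHM σ a c) :
    LeHM σ (supEl σ S) c := by
  induction σ with
  | base => exact supOm_le h
  | arrow σ τ _ ihτ => exact fun y hy => ihτ (by rintro _ ⟨a, ha, rfl⟩; exact h a ha y hy)

theorem infEl_le (σ : Ty) {S : Set (El σ)} {a : El σ} (ha : a ∈ S) :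
    LeHM σ (infEl σ S) a := by
  induction σ with
  | base => exact infOm_le ha
  | arrow σ τ _ ihτ => exact fun y _ => ihτ ⟨a, ha, rfl⟩

theorem le_infEl (σ : Ty) {S : Set (El σ)} {c : El σ} (hne : S.Nonempty)
    (h : ∀ a ∈ S, LeHM σ c a) : LeHM σ c (infEl σ S) := by
  induction σ with
  | base => exact le_infOm hne h
  | arrow σ τ _ ihτ =>
    exact fun y hy => ihτ (hne.image _) (by rintro _ ⟨a, ha, rfl⟩; exact h a ha y hy)

theorem hm_supEl (σ : Ty) {S : Set (El σ)} (hS : S.Countable) (h : ∀ a ∈ S, HM σ a) :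
    HM σ (supEl σ S) := by
  induction σ with
  | base => trivial
  | arrow σ τ _ ihτ =>
    refine ⟨fun y hy => ihτ (hS.image _) ?_, fun y z hy hz hyz => supEl_le τ ?_⟩
    · rintro _ ⟨a, ha, rfl⟩
      exact (h a ha).1 y hy
    · rintro _ ⟨a, ha, rfl⟩
      exact leHM_trans τ ((h a ha).2 y z hy hz hyz) (le_supEl τ (hS.image _) ⟨a, ha, rfl⟩)

theorem hm_infEl (σ : Ty) {S : Set (El σ)} (hne : S.Nonempty) (h : ∀ a ∈ S, HM σ a) :
    HM σ (infEl σ S) := by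
  induction σ with
  | base => trivial
  | arrow σ τ _ ihτ =>
    refine ⟨fun y hy => ihτ (hne.image _) ?_, fun y z hy hz hyz => le_infEl τ (hne.image _) ?_⟩
    · rintro _ ⟨a, ha, rfl⟩
      exact (h a ha).1 y hy
    · rintro _ ⟨a, ha, rfl⟩
      exact leHM_trans τ (infEl_le τ ⟨a, ha, rfl⟩) ((h a ha).2 y z hy hz hyz)

section Limsup

variable {σ : Ty} {μ : Ordinal} {g : ∀ ξ, ξ < μ → El σ}

theorem countable_tail (hμ : μ < ω₁) (γ : Ordinal) :
    {z | ∃ ξ, ∃ h : ξ < μ, γ ≤ ξ ∧ z = g ξ h}.Countable := by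
  have := (countable_Iio_of_lt_omega_one hμ).to_subtype
  refine (Set.countable_range fun p : Set.Iio μ => g p.1 p.2).mono ?_
  rintro _ ⟨ξ, hξ, _, rfl⟩
  exact ⟨⟨ξ, hξ⟩, rfl⟩

theorem le_supEl_tail (hμ : μ < ω₁) {γ ξ : Ordinal} (hξ : ξ < μ) (hγξ : γ ≤ ξ) :
    LeHM σ (g ξ hξ) (supEl σ {z | ∃ ξ, ∃ h : ξ < μ, γ ≤ ξ ∧ z = g ξ h}) :=
  le_supEl σ (countable_tail hμ γ) ⟨ξ, hξ, hγξ, rfl⟩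

theorem limsupEl_le_supEl_tail {γ : Ordinal} (hγ : γ < μ) :
    LeHM σ (limsupEl σ μ g) (supEl σ {z | ∃ ξ, ∃ h : ξ < μ, γ ≤ ξ ∧ z = g ξ h}) :=
  infEl_le σ ⟨γ, hγ, rfl⟩

theorem le_limsupEl (hμ : 0 < μ) {c : El σ}
    (h : ∀ γ < μ, LeHM σ c (supEl σ {z | ∃ ξ, ∃ h : ξ < μ, γ ≤ ξ ∧ z = g ξ h})) :
    LeHM σ c (limsupEl σ μ g) :=
  le_infEl σ ⟨_, 0, hμ, rfl⟩ (by rintro _ ⟨γ, hγ, rfl⟩; exact h γ hγ)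

theorem hm_limsupEl (hμω : μ < ω₁) (hμ : 0 < μ) (h : ∀ ξ hξ, HM σ (g ξ hξ)) :
    HM σ (limsupEl σ μ g) := by
  refine hm_infEl σ ⟨_, 0, hμ, rfl⟩ ?_
  rintro _ ⟨γ, _, rfl⟩
  refine hm_supEl σ (countable_tail hμω γ) ?_
  rintro _ ⟨ξ, hξ, _, rfl⟩
  exact h ξ hξ

end Limsup

theorem rel_add_one_of_chain {X : Type*} (r : X → X → Prop) (a : Ordinal → X) {ζ B δ : Ordinal}
    (base : r (a ζ) (a (ζ + 1)))
    (succ : ∀ α β, α < B → β < B → r (a α) (a β) → r (a (α + 1)) (a (β + 1)))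
    (limit_succ : ∀ μ, IsSuccLimit μ → μ < B → ζ < μ →
      (∀ α β, ζ ≤ α → α ≤ β → β ≤ μ → r (a α) (a β)) → r (a μ) (a (μ + 1)))
    (hζδ : ζ ≤ δ) (hδB : δ < B) (chain : ∀ α β, ζ ≤ α → α ≤ β → β ≤ δ → r (a α) (a β)) :
    r (a δ) (a (δ + 1)) := by
  rcases hζδ.eq_or_lt with rfl | hζδ
  · exact base
  rcases zero_or_succ_or_isSuccLimit δ with rfl | ⟨ε, rfl⟩ | hδ
  · exact (not_lt_zero hζδ).elim
  · rw [succ_eq_add_one] at hζδ hδB chain ⊢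
    exact succ ε (ε + 1) ((lt_add_one ε).trans hδB) hδB
      (chain ε (ε + 1) (lt_add_one_iff.1 hζδ) (lt_add_one ε).le le_rfl)
  · exact limit_succ δ hδ hδB hζδ chain

theorem rel_of_le_of_base_of_succ_of_limit {X : Type*} (r : X → X → Prop) (refl : ∀ p, r p p)
    (trans : ∀ {p q s}, r p q → r q s → r p s) (a : Ordinal → X) {ζ B : Ordinal}
    (base : r (a ζ) (a (ζ + 1)))
    (succ : ∀ α β, α < B → β < B → r (a α) (a β) → r (a (α + 1)) (a (β + 1)))
    (limit_succ : ∀ μ, IsSuccLimit μ → μ < B → ζ < μ →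
      (∀ α β, ζ ≤ α → α ≤ β → β ≤ μ → r (a α) (a β)) → r (a μ) (a (μ + 1)))
    (limit : ∀ μ, IsSuccLimit μ → μ < B → ∀ α < μ,
      (∀ β, α ≤ β → β < μ → r (a α) (a β)) → r (a α) (a μ)) :
    ∀ α β, ζ ≤ α → α ≤ β → β < B → r (a α) (a β) := by
  intro α β hζα hαβ hβB
  induction β using WellFoundedLT.induction generalizing α with
  | _ β ih =>
  rcases hαβ.eq_or_lt with rfl | hαβ
  · exact refl _
  have chain : ∀ α' β', ζ ≤ α' → α' ≤ β' → β' < β → r (a α') (a β') :=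
    fun α' β' hζα' hα'β' hβ' => ih β' hβ' α' hζα' hα'β' (hβ'.trans hβB)
  rcases zero_or_succ_or_isSuccLimit β with rfl | ⟨δ, rfl⟩ | hβ
  · exact (not_lt_zero hαβ).elim
  · rw [succ_eq_add_one] at hαβ hβB chain ⊢
    have hαδ : α ≤ δ := lt_add_one_iff.1 hαβ
    have step : r (a δ) (a (δ + 1)) :=
      rel_add_one_of_chain r a base succ limit_succ (hζα.trans hαδ) ((lt_add_one δ).trans hβB)
        fun α' β' hζα' hα'β' hβ'δ => chain α' β' hζα' hα'β' (lt_add_one_iff.2 hβ'δ)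
    rcases hαδ.eq_or_lt with rfl | hαδ
    · exact step
    · exact trans (chain α δ hζα hαδ.le (lt_add_one δ)) step
  · exact limit β hβ hβB α hαβ fun β' hαβ' hβ' => chain α β' hζα hαβ' hβ'

section Iteration

variable {σ : Ty} {f : El σ → El σ} {x : El σ}

theorem iter_zero : Iter σ 0 f x = x := by
  rw [Iter, limitRecOn_zero]

theorem iter_add_one (α : Ordinal) : Iter σ (α + 1) f x = f (Iter σ α f x) := by
  rw [Iter, limitRecOn_add_one]
  rfl

theorem iter_of_isSuccLimit {μ : Ordinal} (hμ : IsSuccLimit μ) :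
    Iter σ μ f x = limsupEl σ μ (fun ξ _ => Iter σ ξ f x) := by
  rw [Iter, limitRecOn_limit _ _ _ _ hμ]
  rfl

theorem hm_iter (hf : HM (.arrow σ σ) f) (hx : HM σ x) {α : Ordinal} (hα : α < ω₁) :
    HM σ (Iter σ α f x) := by
  induction α using WellFoundedLT.induction with
  | _ α ih =>
  rcases zero_or_succ_or_isSuccLimit α with rfl | ⟨β, rfl⟩ | hα'
  · rwa [iter_zero]
  · rw [succ_eq_add_one] at hα ⊢
    rw [iter_add_one]
    exact hf.1 _ (ih β (lt_add_one β) ((lt_add_one β).trans hα))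
  · rw [iter_of_isSuccLimit hα']
    exact hm_limsupEl hα hα'.pos fun ξ hξ => ih ξ hξ (hξ.trans hα)

theorem iter_add_one_le_iter_add_one (hf : HM (.arrow σ σ) f) (hx : HM σ x) {α β : Ordinal}
    (hα : α < ω₁) (hβ : β < ω₁) (h : LeHM σ (Iter σ α f x) (Iter σ β f x)) :
    LeHM σ (Iter σ (α + 1) f x) (Iter σ (β + 1) f x) := by
  rw [iter_add_one, iter_add_one]
  exact hf.2 _ _ (hm_iter hf hx hα) (hm_iter hf hx hβ) h

theorem iter_le_iter_of_isSuccLimit {α μ : Ordinal} (hμ : IsSuccLimit μ) (hμω : μ < ω₁)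
    (hαμ : α < μ) (h : ∀ β, α ≤ β → β < μ → LeHM σ (Iter σ α f x) (Iter σ β f x)) :
    LeHM σ (Iter σ α f x) (Iter σ μ f x) := by
  rw [iter_of_isSuccLimit hμ]
  refine le_limsupEl hμ.pos fun γ hγ => ?_
  have hβμ : max α γ < μ := max_lt hαμ hγ
  exact leHM_trans σ (h _ (le_max_left α γ) hβμ)
    (le_supEl_tail (g := fun ξ _ => Iter σ ξ f x) hμω hβμ (le_max_right α γ))

theorem iter_of_isSuccLimit_le_iter {α μ : Ordinal} (hμ : IsSuccLimit μ) (hαμ : α < μ)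
    (h : ∀ β, α ≤ β → β < μ → LeHM σ (Iter σ β f x) (Iter σ α f x)) :
    LeHM σ (Iter σ μ f x) (Iter σ α f x) := by
  rw [iter_of_isSuccLimit hμ]
  refine leHM_trans σ (limsupEl_le_supEl_tail hαμ) (supEl_le σ ?_)
  rintro _ ⟨β, hβμ, hαβ, rfl⟩
  exact h β hαβ hβμ

theorem iter_le_iter_add_one_of_isSuccLimit (hf : HM (.arrow σ σ) f) (hx : HM σ x)
    {ζ δ : Ordinal} (hδ : IsSuccLimit δ) (hδω : δ < ω₁) (hζδ : ζ < δ)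
    (chain : ∀ α β, ζ ≤ α → α ≤ β → β ≤ δ → LeHM σ (Iter σ α f x) (Iter σ β f x)) :
    LeHM σ (Iter σ δ f x) (Iter σ (δ + 1) f x) := by
  conv_lhs => rw [iter_of_isSuccLimit hδ]
  refine leHM_trans σ (limsupEl_le_supEl_tail hζδ) (supEl_le σ ?_)
  rintro _ ⟨ξ, hξδ, hζξ, rfl⟩
  exact leHM_trans σ (chain ξ (ξ + 1) hζξ (lt_add_one ξ).le (hδ.add_one_lt hξδ).le)
    (iter_add_one_le_iter_add_one hf hx (hξδ.trans hδω) hδω (chain ξ δ hζξ hξδ.le le_rfl))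

theorem iter_add_one_le_iter_of_isSuccLimit (hf : HM (.arrow σ σ) f) (hx : HM σ x)
    {ζ δ : Ordinal} (hδ : IsSuccLimit δ) (hδω : δ < ω₁) (hζδ : ζ < δ)
    (chain : ∀ α β, ζ ≤ α → α ≤ β → β ≤ δ → LeHM σ (Iter σ β f x) (Iter σ α f x)) :
    LeHM σ (Iter σ (δ + 1) f x) (Iter σ δ f x) := by
  conv_rhs => rw [iter_of_isSuccLimit hδ]
  refine le_limsupEl hδ.pos fun γ hγ => ?_
  have hξδ : max γ ζ < δ := max_lt hγ hζδ
  exact leHM_trans σ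
    (iter_add_one_le_iter_add_one hf hx hδω (hξδ.trans hδω)
      (chain _ δ (le_max_right γ ζ) hξδ.le le_rfl))
    (le_supEl_tail (g := fun ξ _ => Iter σ ξ f x) hδω (hδ.add_one_lt hξδ)
      ((le_max_left γ ζ).trans (lt_add_one _).le))

end Iteration

theorem iter_monotone_from_hm_general (σ : Ty) (ζ : Ordinal)
    (f : El σ → El σ) (hf : HM (.arrow σ σ) f) (x : El σ) (hx : HM σ x) :
    (LeHM σ (Iter σ ζ f x) (Iter σ (ζ + 1) f x) →
      ∀ α γ, ζ ≤ α → α < γ → γ < ω₁ → LeHM σ (Iter σ α f x) (Iter σ γ f x)) ∧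
    (LeHM σ (Iter σ (ζ + 1) f x) (Iter σ ζ f x) →
      ∀ α γ, ζ ≤ α → α < γ → γ < ω₁ → LeHM σ (Iter σ γ f x) (Iter σ α f x)) := by
  refine ⟨fun hstep α γ hζα hαγ hγ => ?_, fun hstep α γ hζα hαγ hγ => ?_⟩
  · exact rel_of_le_of_base_of_succ_of_limit (LeHM σ) (leHM_refl σ) (leHM_trans σ)
      (fun α => Iter σ α f x) hstep
      (fun _ _ hα hβ => iter_add_one_le_iter_add_one hf hx hα hβ)
      (fun _ => iter_le_iter_add_one_of_isSuccLimit hf hx)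
      (fun _ hμ hμω _ => iter_le_iter_of_isSuccLimit hμ hμω) α γ hζα hαγ.le hγ
  · exact rel_of_le_of_base_of_succ_of_limit (fun p q => LeHM σ q p) (leHM_refl σ)
      (fun hpq hqs => leHM_trans σ hqs hpq) (fun α => Iter σ α f x) hstep
      (fun _ _ hα hβ => iter_add_one_le_iter_add_one hf hx hβ hα)
      (fun _ => iter_add_one_le_iter_of_isSuccLimit hf hx)
      (fun _ hμ _ _ => iter_of_isSuccLimit_le_iter hμ) α γ hζα hαγ.le hγ

/-- For hereditarily monotone `f ∈ Ω^mon_{σ→σ}` and `x ∈ Ω^mon_σ`: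
(1) if `Iter_{ζ+1} f x ≥ Iter_ζ f x` then `Iter_γ f x ≥ Iter_α f x` for all countable
`γ > α ≥ ζ`; (2) if `Iter_{ζ+1} f x ≤ Iter_ζ f x` then `Iter_γ f x ≤ Iter_α f x`
for all countable `γ > α ≥ ζ`. -/
theorem iter_monotone_from_hm (σ : Ty) (ζ : Ordinal) (hζ : ζ < ω₁)
    (f : El σ → El σ) (hf : HM (.arrow σ σ) f) (x : El σ) (hx : HM σ x) :
    (LeHM σ (Iter σ ζ f x) (Iter σ (ζ + 1) f x) →
      ∀ α γ, ζ ≤ α → α < γ → γ < ω₁ → LeHM σ (Iter σ α f x) (Iter σ γ f x)) ∧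
    (LeHM σ (Iter σ (ζ + 1) f x) (Iter σ ζ f x) →
      ∀ α γ, ζ ≤ α → α < γ → γ < ω₁ → LeHM σ (Iter σ γ f x) (Iter σ α f x)) :=
  iter_monotone_from_hm_general σ ζ f hf x hx

end IterOrd
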